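/- Let $0<\alpha\le1$ and $h_1,h_2\in C^1[0,T]$. Then $\int_0^T (\partial_{0+}^\alpha h_1)(t)\,h_2(t)\,dt + h_1(0)\,(J_{T-}^{1-\alpha}h_2)(0) = -\int_0^T h_1(t)\,(D_{T-}^\alpha h_2)(t)\,dt + h_1(T)\,(J_{T-}^{1-\alpha}h_2)(T)$, provided $J_{T-}^{1-\alpha}h_2$ is differentiable on $[0,T]$. -/

import Mathlib

open MeasureTheory Set intervalIntegral Filter Topology

lemma kerII {γ : ℝ} (hγ : 0 < γ) (x a : ℝ) :
    IntervalIntegrable (fun y => (x - y) ^ (γ - 1)) volume a x := by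
  have h := (intervalIntegrable_rpow' (a := 0) (b := x - a) (r := γ - 1) (by linarith)).comp_sub_left x
  simpa using h.symm

lemma kerII' {γ : ℝ} (hγ : 0 < γ) (y b : ℝ) :
    IntervalIntegrable (fun x => (x - y) ^ (γ - 1)) volume y b := by
  have h := (intervalIntegrable_rpow' (a := 0) (b := b - y) (r := γ - 1)
    (by linarith)).comp_sub_right y
  simpa using h

lemma ker_eval {γ : ℝ} (hγ : 0 < γ) {a x : ℝ} (h : a ≤ x) :
    ∫ y in Ioc a x, (x - y) ^ (γ - 1) = (x - a) ^ γ / γ := by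
  rw [← intervalIntegral.integral_of_le h]
  rw [intervalIntegral.integral_comp_sub_left (fun u => u ^ (γ - 1)) x]
  rw [integral_rpow (Or.inl (by linarith))]
  simp [sub_self]
  rw [Real.zero_rpow (by positivity : γ ≠ 0)]
  ring

lemma fubini_kernel {γ : ℝ} (hγ0 : 0 < γ) (hγ1 : γ < 1) {a b : ℝ} (hab : a ≤ b)
    {f g : ℝ → ℝ} (hf : Continuous f) (hg : Continuous g) :
    ∫ x in a..b, (∫ y in a..x, (x - y) ^ (γ - 1) * f y) * g x
      = ∫ y in a..b, f y * ∫ x in y..b, (x - y) ^ (γ - 1) * g x := by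
  classical
  set Φ : ℝ → ℝ → ℝ := fun x y =>
    if a < y ∧ y ≤ x ∧ x ≤ b then (x - y) ^ (γ - 1) * f y * g x else 0 with hΦdef
  have measS : MeasurableSet {p : ℝ × ℝ | a < p.2 ∧ p.2 ≤ p.1 ∧ p.1 ≤ b} := by
    refine (measurableSet_lt measurable_const measurable_snd).inter
      ((measurableSet_le measurable_snd measurable_fst).inter
        (measurableSet_le measurable_fst measurable_const))
  have measΦ : Measurable (Function.uncurry Φ) := by
    have h1 : Function.uncurry Φ = fun p : ℝ × ℝ =>
        Set.indicator {p : ℝ × ℝ | a < p.2 ∧ p.2 ≤ p.1 ∧ p.1 ≤ b}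
          (fun p => (p.1 - p.2) ^ (γ - 1) * f p.2 * g p.1) p := by
      funext p
      simp only [Function.uncurry, Set.indicator, mem_setOf_eq, hΦdef]
    rw [h1]
    exact Measurable.indicator (by fun_prop) measS
  -- sections in x
  have secx : ∀ x, a ≤ x → x ≤ b →
      Φ x = (Ioc a x).indicator (fun y => (x - y) ^ (γ - 1) * f y * g x) := by
    intro x hax hxb
    funext y
    by_cases hy : y ∈ Ioc a x
    · simp [hΦdef, Set.indicator_of_mem hy, hy.1, hy.2, hxb]
    · rw [Set.indicator_of_notMem hy]
      rw [mem_Ioc, not_and_or] at hy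
      rcases hy with hy | hy <;> simp [hΦdef] <;> intro h1 h2 <;> tauto
  have secx0 : ∀ x, ¬ (a < x ∧ x ≤ b) → Φ x = fun _ => 0 := by
    intro x hx
    funext y
    rw [not_and_or] at hx
    rcases hx with hx | hx <;> push_neg at hx <;> simp [hΦdef] <;> intro h1 h2 h3 <;>
      [linarith; linarith]
  have secint : ∀ x, IntegrableOn (fun y => (x - y) ^ (γ - 1) * f y * g x) (Ioc a x) volume := by
    intro x
    rcases le_or_gt a x with h | h
    · have h2 := ((kerII hγ0 x a).mul_continuousOn hf.continuousOn).mul_const (g x)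
      rwa [intervalIntegrable_iff_integrableOn_Ioc_of_le h] at h2
    · rw [Ioc_eq_empty (by exact fun hlt => absurd hlt (not_lt.mpr h.le))]
      exact integrableOn_empty
  -- bounds
  obtain ⟨Mf, hMf⟩ := (isCompact_Icc (a := a) (b := b)).exists_bound_of_continuousOn
    hf.continuousOn
  obtain ⟨Mg, hMg⟩ := (isCompact_Icc (a := a) (b := b)).exists_bound_of_continuousOn
    hg.continuousOn
  have hMf0 : 0 ≤ Mf := le_trans (norm_nonneg _) (hMf a ⟨le_refl a, hab⟩)
  have hMg0 : 0 ≤ Mg := le_trans (norm_nonneg _) (hMg a ⟨le_refl a, hab⟩)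
  -- integrability of sections
  have int_sec : ∀ x, Integrable (fun y => Φ x y) volume := by
    intro x
    by_cases hx : a < x ∧ x ≤ b
    · rw [secx x hx.1.le hx.2]
      rw [integrable_indicator_iff measurableSet_Ioc]
      exact secint x
    · rw [secx0 x hx]
      exact integrable_zero _ _ _
  -- bound on norm-integral of sections
  have norm_sec_bound : ∀ x, (∫ y, ‖Φ x y‖) ≤
      (Ioc a b).indicator (fun _ => Mf * Mg * ((b - a) ^ γ / γ)) x := by
    intro x
    by_cases hx : a < x ∧ x ≤ b
    · rw [Set.indicator_of_mem (mem_Ioc.mpr hx)]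
      have hax : a ≤ x := hx.1.le
      rw [secx x hax hx.2]
      have h1 : (∫ y, ‖(Ioc a x).indicator (fun y => (x - y) ^ (γ - 1) * f y * g x) y‖)
          = ∫ y in Ioc a x, ‖(x - y) ^ (γ - 1) * f y * g x‖ := by
        rw [← MeasureTheory.integral_indicator measurableSet_Ioc]
        congr 1
        funext y
        by_cases hy : y ∈ Ioc a x
        · rw [Set.indicator_of_mem hy, Set.indicator_of_mem hy]
        · rw [Set.indicator_of_notMem hy, Set.indicator_of_notMem hy, norm_zero]
      rw [h1]
      have h2 : ∫ y in Ioc a x, ‖(x - y) ^ (γ - 1) * f y * g x‖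
          ≤ ∫ y in Ioc a x, (x - y) ^ (γ - 1) * (Mf * Mg) := by
        apply setIntegral_mono_on ((secint x).norm)
        · have := (kerII hγ0 x a).mul_const (Mf * Mg)
          rwa [intervalIntegrable_iff_integrableOn_Ioc_of_le hax] at this
        · exact measurableSet_Ioc
        · intro y hy
          have hxy : (0:ℝ) ≤ x - y := by linarith [hy.2]
          have hk : (0:ℝ) ≤ (x - y) ^ (γ - 1) := Real.rpow_nonneg hxy _
          have hyIcc : y ∈ Icc a b := ⟨hy.1.le, hy.2.trans hx.2⟩
          have hxIcc : x ∈ Icc a b := ⟨hax, hx.2⟩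
          calc ‖(x - y) ^ (γ - 1) * f y * g x‖
              = (x - y) ^ (γ - 1) * (‖f y‖ * ‖g x‖) := by
                rw [norm_mul, norm_mul, Real.norm_of_nonneg hk]; ring
            _ ≤ (x - y) ^ (γ - 1) * (Mf * Mg) := by
                apply mul_le_mul_of_nonneg_left _ hk
                exact mul_le_mul (hMf y hyIcc) (hMg x hxIcc) (norm_nonneg _) hMf0
      refine h2.trans ?_
      rw [MeasureTheory.integral_mul_const, ker_eval hγ0 hax]
      have : (x - a) ^ γ / γ ≤ (b - a) ^ γ / γ := by
        have hr : (x - a) ^ γ ≤ (b - a) ^ γ :=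
          Real.rpow_le_rpow (by linarith) (by linarith [hx.2]) hγ0.le
        exact (div_le_div_iff_of_pos_right hγ0).mpr hr
      calc (x - a) ^ γ / γ * (Mf * Mg) ≤ (b - a) ^ γ / γ * (Mf * Mg) := by
            apply mul_le_mul_of_nonneg_right this (by positivity)
        _ = Mf * Mg * ((b - a) ^ γ / γ) := by ring
    · rw [Set.indicator_of_notMem (by rwa [mem_Ioc])]
      rw [secx0 x hx]
      simp
  -- integrability on the product
  have intΦ : Integrable (Function.uncurry Φ) (volume.prod volume) := by
    rw [integrable_prod_iff measΦ.aestronglyMeasurable]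
    constructor
    · exact Eventually.of_forall int_sec
    · apply Integrable.mono' (g := (Ioc a b).indicator (fun _ => Mf * Mg * ((b - a) ^ γ / γ)))
      · exact (integrable_indicator_iff measurableSet_Ioc).mpr (integrableOn_const
          measure_Ioc_lt_top.ne)
      · exact (measΦ.norm.aestronglyMeasurable).integral_prod_right'
      · apply Eventually.of_forall
        intro x
        rw [Real.norm_of_nonneg (integral_nonneg (fun y => norm_nonneg _))]
        exact norm_sec_bound x
  -- swap
  have swap := integral_integral_swap (f := Φ) intΦ
  -- evaluate LHS
  have lhs_eval : (∫ x, ∫ y, Φ x y) =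
      ∫ x in a..b, (∫ y in a..x, (x - y) ^ (γ - 1) * f y) * g x := by
    have inner : ∀ x, (∫ y, Φ x y) =
        (Ioc a b).indicator (fun x => (∫ y in a..x, (x - y) ^ (γ - 1) * f y) * g x) x := by
      intro x
      by_cases hx : a < x ∧ x ≤ b
      · rw [Set.indicator_of_mem (mem_Ioc.mpr hx), secx x hx.1.le hx.2,
          MeasureTheory.integral_indicator measurableSet_Ioc,
          ← intervalIntegral.integral_of_le hx.1.le, intervalIntegral.integral_mul_const]
      · rw [Set.indicator_of_notMem (by rwa [mem_Ioc]), secx0 x hx]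
        simp
    rw [funext inner, MeasureTheory.integral_indicator measurableSet_Ioc,
      ← intervalIntegral.integral_of_le hab]
  -- evaluate RHS
  have rhs_eval : (∫ y, ∫ x, Φ x y) =
      ∫ y in a..b, f y * ∫ x in y..b, (x - y) ^ (γ - 1) * g x := by
    have inner : ∀ y, (∫ x, Φ x y) =
        (Ioc a b).indicator (fun y => f y * ∫ x in y..b, (x - y) ^ (γ - 1) * g x) y := by
      intro y
      by_cases hy : a < y ∧ y ≤ b
      · rw [Set.indicator_of_mem (mem_Ioc.mpr hy)]
        have hsec : (fun x => Φ x y) =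
            (Icc y b).indicator (fun x => (x - y) ^ (γ - 1) * f y * g x) := by
          funext x
          by_cases hx : x ∈ Icc y b
          · simp [hΦdef, Set.indicator_of_mem hx, hy.1, hx.1, hx.2]
          · rw [Set.indicator_of_notMem hx]
            rw [mem_Icc, not_and_or] at hx
            rcases hx with hx | hx <;> simp [hΦdef] <;> intro h1 h2 <;> tauto
        rw [hsec, MeasureTheory.integral_indicator measurableSet_Icc,
          MeasureTheory.integral_Icc_eq_integral_Ioc,
          ← intervalIntegral.integral_of_le hy.2]
        have : (fun x => (x - y) ^ (γ - 1) * f y * g x)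
            = fun x => f y * ((x - y) ^ (γ - 1) * g x) := by funext x; ring
        rw [this, intervalIntegral.integral_const_mul]
      · rw [Set.indicator_of_notMem (by rwa [mem_Ioc])]
        rw [not_and_or] at hy
        have hzero : (fun x => Φ x y) = fun _ => 0 := by
          funext x
          rcases hy with hy | hy <;> push_neg at hy <;> simp [hΦdef] <;>
            intro h1 h2 h3 <;> linarith
        rw [hzero]
        simp
    rw [funext inner, MeasureTheory.integral_indicator measurableSet_Ioc,
      ← intervalIntegral.integral_of_le hab]
  rw [← lhs_eval, ← rhs_eval]
  exact swap

section K
variable {β T : ℝ} {g : ℝ → ℝ}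

/-- continuity of `K u = ∫ τ in u..T, (τ-u)^(β-1) g τ` at points of `(0,T)`. -/
lemma K_contAt (hβ0 : 0 < β) (hβ1 : β < 1) (hT : 0 < T) (hg : Continuous g)
    {t₀ : ℝ} (ht₀ : t₀ ∈ Ioo 0 T) :
    ContinuousAt (fun u => ∫ τ in u..T, (τ - u) ^ (β - 1) * g τ) t₀ := by
  classical
  set F : ℝ → ℝ → ℝ := fun u s =>
    Set.indicator {s : ℝ | s ≤ T - u} (fun s => s ^ (β - 1) * g (s + u)) s with hFdef
  have key : ∀ u ∈ Icc (0:ℝ) T,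
      (∫ τ in u..T, (τ - u) ^ (β - 1) * g τ) = ∫ s in (0:ℝ)..T, F u s := by
    intro u hu
    have h1 : (∫ s in (0:ℝ)..T, F u s) = ∫ s in (0:ℝ)..(T - u), s ^ (β - 1) * g (s + u) := by
      exact intervalIntegral.integral_indicator ⟨by linarith [hu.2], by linarith [hu.1]⟩
    have h2 : (∫ s in (0:ℝ)..(T - u), s ^ (β - 1) * g (s + u))
        = ∫ τ in (0 + u)..(T - u + u), (τ - u) ^ (β - 1) * g τ := by
      rw [← intervalIntegral.integral_comp_add_right (fun τ => (τ - u) ^ (β - 1) * g τ) u]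
      congr 1
      funext s
      simp
    rw [h1, h2]
    norm_num
  obtain ⟨M, hM⟩ := (isCompact_Icc (a := (0:ℝ)) (b := 2 * T)).exists_bound_of_continuousOn
    hg.continuousOn
  have hM0 : 0 ≤ M := le_trans (norm_nonneg _) (hM 0 ⟨le_refl _, by linarith⟩)
  have hcont2 : ContinuousAt (fun u => ∫ s in (0:ℝ)..T, F u s) t₀ := by
    apply intervalIntegral.continuousAt_of_dominated_interval
      (bound := fun s => s ^ (β - 1) * M)
    · apply Eventually.of_forall
      intro u
      apply Measurable.aestronglyMeasurable
      apply Measurable.indicator (by fun_prop)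
      exact measurableSet_Iic (a := T - u)
    · have hev : ∀ᶠ u in 𝓝 t₀, u ∈ Ioo (0:ℝ) T :=
        (isOpen_Ioo).mem_nhds ht₀
      filter_upwards [hev] with u hu
      apply Eventually.of_forall
      intro s hs
      rw [uIoc_of_le hT.le] at hs
      by_cases hmem : s ∈ {s : ℝ | s ≤ T - u}
      · rw [hFdef]
        simp only [Set.indicator_of_mem hmem]
        have hs0 : 0 < s := hs.1
        have hk : (0:ℝ) ≤ s ^ (β - 1) := Real.rpow_nonneg hs0.le _
        rw [norm_mul, Real.norm_of_nonneg hk]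
        apply mul_le_mul_of_nonneg_left _ hk
        apply hM
        constructor
        · linarith [hu.1]
        · linarith [hs.2, hu.2]
      · rw [hFdef]
        simp only [Set.indicator_of_notMem hmem, norm_zero]
        exact mul_nonneg (Real.rpow_nonneg hs.1.le _) hM0
    · exact (intervalIntegrable_rpow' (by linarith)).mul_const M
    · have hne : ∀ᵐ s : ℝ, s ≠ T - t₀ := by
        rw [MeasureTheory.ae_iff]
        have hset : {s : ℝ | ¬ s ≠ T - t₀} = {T - t₀} := by ext s; simp
        rw [hset, Real.volume_singleton]
      filter_upwards [hne] with s hsne _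
      rcases lt_or_gt_of_ne hsne with hlt | hgt
      · have hev : (fun u => F u s) =ᶠ[𝓝 t₀] fun u => s ^ (β - 1) * g (s + u) := by
          filter_upwards [Iio_mem_nhds (show t₀ < T - s by linarith)] with u hu
          have hmem : s ∈ {s : ℝ | s ≤ T - u} := by
            have := mem_Iio.mp hu
            simp only [mem_setOf_eq]
            linarith
          exact Set.indicator_of_mem hmem _
        exact ContinuousAt.congr (by fun_prop) hev.symm
      · have hev : (fun u => F u s) =ᶠ[𝓝 t₀] fun _ => 0 := by
          filter_upwards [Ioi_mem_nhds (show T - s < t₀ by linarith)] with u hu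
          have hmem : s ∉ {s : ℝ | s ≤ T - u} := by
            have := mem_Ioi.mp hu
            simp only [mem_setOf_eq, not_le]
            linarith
          exact Set.indicator_of_notMem hmem _
        exact ContinuousAt.congr continuousAt_const hev.symm
  apply hcont2.congr
  have hev : ∀ᶠ u in 𝓝 t₀, u ∈ Ioo (0:ℝ) T := (isOpen_Ioo).mem_nhds ht₀
  filter_upwards [hev] with u hu
  exact (key u ⟨hu.1.le, hu.2.le⟩).symm

end K

lemma ker_eval' {γ : ℝ} (hγ : 0 < γ) {u T : ℝ} (h : u ≤ T) :
    ∫ τ in u..T, (τ - u) ^ (γ - 1) = (T - u) ^ γ / γ := by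
  rw [intervalIntegral.integral_comp_sub_right (fun x => x ^ (γ - 1)) u]
  rw [integral_rpow (Or.inl (by linarith))]
  simp [sub_self]
  rw [Real.zero_rpow (by positivity : γ ≠ 0)]
  ring

section K
variable {β T : ℝ} {g : ℝ → ℝ}

lemma K_bound (hβ0 : 0 < β) (hg : Continuous g) {M : ℝ}
    (hM : ∀ x ∈ Icc (0:ℝ) T, ‖g x‖ ≤ M) {u : ℝ} (hu : u ∈ Icc (0:ℝ) T) :
    ‖∫ τ in u..T, (τ - u) ^ (β - 1) * g τ‖ ≤ M * T ^ β / β := by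
  have hM0 : 0 ≤ M := le_trans (norm_nonneg _) (hM 0 ⟨le_refl _, hu.1.trans hu.2⟩)
  have h1 : ‖∫ τ in u..T, (τ - u) ^ (β - 1) * g τ‖
      ≤ |∫ τ in u..T, (τ - u) ^ (β - 1) * M| := by
    apply intervalIntegral.norm_integral_le_abs_of_norm_le
    · rw [uIoc_of_le hu.2]
      filter_upwards [MeasureTheory.ae_restrict_mem measurableSet_Ioc] with τ hτ
      have hk : (0:ℝ) ≤ (τ - u) ^ (β - 1) := Real.rpow_nonneg (by linarith [hτ.1.le]) _
      rw [norm_mul, Real.norm_of_nonneg hk]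
      exact mul_le_mul_of_nonneg_left (hM τ ⟨le_trans hu.1 hτ.1.le, hτ.2⟩) hk
    · exact (kerII' hβ0 u T).mul_const M
  have h2 : (∫ τ in u..T, (τ - u) ^ (β - 1) * M) = (T - u) ^ β / β * M := by
    rw [intervalIntegral.integral_mul_const, ker_eval' hβ0 hu.2]
  rw [h2] at h1
  have h3 : |(T - u) ^ β / β * M| = (T - u) ^ β / β * M := by
    rw [abs_of_nonneg]
    have : (0:ℝ) ≤ (T - u) ^ β := Real.rpow_nonneg (by linarith [hu.2]) _
    positivity
  rw [h3] at h1
  refine h1.trans ?_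
  have h4 : (T - u) ^ β ≤ T ^ β :=
    Real.rpow_le_rpow (by linarith [hu.2]) (by linarith [hu.1]) hβ0.le
  calc (T - u) ^ β / β * M ≤ T ^ β / β * M := by
        apply mul_le_mul_of_nonneg_right _ hM0
        exact (div_le_div_iff_of_pos_right hβ0).mpr h4
    _ = M * T ^ β / β := by ring

lemma K_II (hβ0 : 0 < β) (hβ1 : β < 1) (hT : 0 < T) (hg : Continuous g)
    {t : ℝ} (ht0 : 0 ≤ t) (htT : t ≤ T) :
    IntervalIntegrable (fun u => ∫ τ in u..T, (τ - u) ^ (β - 1) * g τ) volume t T := by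
  obtain ⟨M, hM⟩ := (isCompact_Icc (a := (0:ℝ)) (b := T)).exists_bound_of_continuousOn
    hg.continuousOn
  rw [intervalIntegrable_iff_integrableOn_Ioc_of_le htT]
  have hIoo : IntegrableOn (fun u => ∫ τ in u..T, (τ - u) ^ (β - 1) * g τ) (Ioo t T) volume := by
    apply Integrable.mono' (g := fun _ => M * T ^ β / β)
    · exact integrableOn_const measure_Ioo_lt_top.ne
    · apply ContinuousOn.aestronglyMeasurable _ measurableSet_Ioo
      intro u hu
      exact (K_contAt hβ0 hβ1 hT hg ⟨lt_of_le_of_lt ht0 hu.1, hu.2⟩).continuousWithinAt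
    · filter_upwards [MeasureTheory.ae_restrict_mem measurableSet_Ioo] with u hu
      exact K_bound hβ0 hg hM ⟨le_trans ht0 hu.1.le, hu.2.le⟩
  exact hIoo.congr_set_ae (MeasureTheory.Ioo_ae_eq_Ioc).symm

end K

section Rep
variable {β T : ℝ} {h₂ : ℝ → ℝ}

lemma JTrep (hβ0 : 0 < β) (hβ1 : β < 1) (hc₂ : ContDiff ℝ 1 h₂)
    {t : ℝ} (htT : t ≤ T) :
    (∫ τ in t..T, (τ - t) ^ (β - 1) * h₂ τ)
      = (T - t) ^ β / β * h₂ T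
        - ∫ u in t..T, (∫ τ in u..T, (τ - u) ^ (β - 1) * deriv h₂ τ) := by
  have hd₂ : Differentiable ℝ h₂ := hc₂.differentiable one_ne_zero
  have hd₂' : Continuous (deriv h₂) := (hc₂.iterate_deriv' 0 1).continuous
  have hcontpow : Continuous fun τ : ℝ => (τ - t) ^ β := by
    have h1 : ∀ x : ℝ, ContinuousAt (fun y : ℝ => y ^ β) x := fun x =>
      Real.continuousAt_rpow_const x β (Or.inr hβ0.le)
    exact (continuous_iff_continuousAt.mpr h1).comp (continuous_id.sub continuous_const)
  set Φ : ℝ → ℝ := fun τ => (τ - t) ^ β / β * h₂ τ with hΦ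
  have int1 : IntervalIntegrable (fun τ => (τ - t) ^ (β - 1) * h₂ τ) volume t T :=
    (kerII' hβ0 t T).mul_continuousOn hc₂.continuous.continuousOn
  have int2 : IntervalIntegrable (fun τ => (τ - t) ^ β / β * deriv h₂ τ) volume t T :=
    ((hcontpow.div_const β).mul hd₂').intervalIntegrable t T
  have hderivΦ : ∀ τ ∈ Ioo t T, HasDerivAt Φ
      ((τ - t) ^ (β - 1) * h₂ τ + (τ - t) ^ β / β * deriv h₂ τ) τ := by
    intro τ hτ
    have hin : HasDerivAt (fun τ : ℝ => τ - t) 1 τ := (hasDerivAt_id τ).sub_const t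
    have h1 : HasDerivAt (fun τ : ℝ => (τ - t) ^ β) (β * (τ - t) ^ (β - 1) * 1) τ := by
      have := (Real.hasDerivAt_rpow_const (x := τ - t) (p := β)
        (Or.inl (by have := hτ.1; intro h; rw [sub_eq_zero] at h; exact absurd h.symm this.ne))).comp
        τ hin
      exact this
    have h2 : HasDerivAt Φ (β * (τ - t) ^ (β - 1) * 1 / β * h₂ τ + (τ - t) ^ β / β * deriv h₂ τ) τ :=
      (h1.div_const β).mul ((hd₂ τ).hasDerivAt)
    convert h2 using 1
    field_simp
  have hFTC := intervalIntegral.integral_eq_sub_of_hasDeriv_right_of_le htT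
    ((hcontpow.div_const β).mul hc₂.continuous).continuousOn
    (fun x hx => (hderivΦ x hx).hasDerivWithinAt)
    (int1.add int2)
  rw [intervalIntegral.integral_add int1 int2] at hFTC
  have hΦt : Φ t = 0 := by simp [hΦ, Real.zero_rpow hβ0.ne']
  have hΦT : Φ T = (T - t) ^ β / β * h₂ T := rfl
  have hB : (∫ τ in t..T, (τ - t) ^ β / β * deriv h₂ τ)
      = ∫ u in t..T, (∫ τ in u..T, (τ - u) ^ (β - 1) * deriv h₂ τ) := by
    have hfub := fubini_kernel hβ0 hβ1 htT (f := fun _ => (1:ℝ)) (g := deriv h₂)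
      continuous_const hd₂'
    have hL : (∫ x in t..T, (∫ y in t..x, (x - y) ^ (β - 1) * 1) * deriv h₂ x)
        = ∫ x in t..T, (x - t) ^ β / β * deriv h₂ x := by
      apply intervalIntegral.integral_congr
      intro x hx
      rw [uIcc_of_le htT] at hx
      have he : (∫ y in t..x, (x - y) ^ (β - 1) * 1) = (x - t) ^ β / β := by
        simp only [mul_one]
        rw [intervalIntegral.integral_of_le hx.1, ker_eval hβ0 hx.1]
      show (∫ y in t..x, (x - y) ^ (β - 1) * 1) * deriv h₂ x = (x - t) ^ β / β * deriv h₂ x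
      rw [he]
    rw [hL] at hfub
    rw [hfub]
    simp
  have h0 : (t - t) ^ β / β * h₂ t = 0 := by
    simp [Real.zero_rpow hβ0.ne']
  rw [← hB]
  simp only [Pi.mul_apply] at hFTC
  linarith [hFTC, h0]

lemma JTderiv (hβ0 : 0 < β) (hβ1 : β < 1) (hT : 0 < T) (hc₂ : ContDiff ℝ 1 h₂)
    {t : ℝ} (ht : t ∈ Ioo 0 T) :
    HasDerivAt (fun t => (T - t) ^ β / β * h₂ T
        - ∫ u in t..T, (∫ τ in u..T, (τ - u) ^ (β - 1) * deriv h₂ τ))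
      ((∫ τ in t..T, (τ - t) ^ (β - 1) * deriv h₂ τ) - (T - t) ^ (β - 1) * h₂ T) t := by
  have hd₂' : Continuous (deriv h₂) := (hc₂.iterate_deriv' 0 1).continuous
  have hin : HasDerivAt (fun t : ℝ => T - t) (-1) t := (hasDerivAt_id t).const_sub T
  have h1 : HasDerivAt (fun t : ℝ => (T - t) ^ β) (β * (T - t) ^ (β - 1) * (-1)) t :=
    (Real.hasDerivAt_rpow_const (x := T - t) (p := β)
      (Or.inl (by have := ht.2; intro h; rw [sub_eq_zero] at h; exact absurd h.symm this.ne))).comp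
      t hin
  have h2 := (h1.div_const β).mul_const (h₂ T)
  have h3 := intervalIntegral.integral_hasDerivAt_left
    (K_II hβ0 hβ1 hT hd₂' ht.1.le ht.2.le)
    (ContinuousAt.stronglyMeasurableAtFilter isOpen_Ioo
      (fun x hx => K_contAt hβ0 hβ1 hT hd₂' hx) t ht)
    (K_contAt hβ0 hβ1 hT hd₂' ht)
  have h4 : HasDerivAt (fun t => (T - t) ^ β / β * h₂ T
      - ∫ u in t..T, (∫ τ in u..T, (τ - u) ^ (β - 1) * deriv h₂ τ))
      (β * (T - t) ^ (β - 1) * -1 / β * h₂ T - -∫ τ in t..T, (τ - t) ^ (β - 1) * deriv h₂ τ) t :=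
    h2.sub h3
  convert h4 using 1
  field_simp
  ring

end Rep

noncomputable def J0 (β : ℝ) (h : ℝ → ℝ) (t : ℝ) : ℝ :=
  if β = 0 then h t
  else (1 / Real.Gamma β) * ∫ τ in (0:ℝ)..t, (t - τ) ^ (β - 1) * h τ

noncomputable def JT (β T : ℝ) (h : ℝ → ℝ) (t : ℝ) : ℝ :=
  if β = 0 then h t
  else (1 / Real.Gamma β) * ∫ τ in t..T, (τ - t) ^ (β - 1) * h τ

/-- Forward Caputo derivative of order `α ∈ (0,1]`. -/
noncomputable def caputo (α : ℝ) (h : ℝ → ℝ) : ℝ → ℝ := J0 (1 - α) (deriv h)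

/-- Backward Riemann-Liouville derivative of order `α ∈ (0,1]`. -/
noncomputable def rlBackDeriv (α T : ℝ) (h : ℝ → ℝ) : ℝ → ℝ := deriv (JT (1 - α) T h)

/-- fractional integration by parts, case `0 < α ≤ 1`. -/
theorem frac_int_by_parts_one (α T : ℝ) (hα0 : 0 < α) (hα1 : α ≤ 1) (hT : 0 < T)
    (h₁ h₂ : ℝ → ℝ) (hc₁ : ContDiff ℝ 1 h₁) (hc₂ : ContDiff ℝ 1 h₂)
    (hdiff : Differentiable ℝ (JT (1 - α) T h₂)) :
    (∫ t in (0:ℝ)..T, (caputo α h₁ t) * h₂ t) + h₁ 0 * (JT (1 - α) T h₂ 0)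
      = -(∫ t in (0:ℝ)..T, h₁ t * (rlBackDeriv α T h₂ t)) + h₁ T * (JT (1 - α) T h₂ T) := by
  have hd₁ : Differentiable ℝ h₁ := hc₁.differentiable one_ne_zero
  have hd₂ : Differentiable ℝ h₂ := hc₂.differentiable one_ne_zero
  have hd₁' : Continuous (deriv h₁) := (hc₁.iterate_deriv' 0 1).continuous
  have hd₂' : Continuous (deriv h₂) := (hc₂.iterate_deriv' 0 1).continuous
  rcases eq_or_lt_of_le hα1 with hα1' | hα1'
  · -- case α = 1
    subst hα1'
    have hJT : JT (1 - 1) T h₂ = h₂ := by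
      funext t
      simp [JT]
    rw [hJT]
    have hcap : ∀ t, caputo 1 h₁ t = deriv h₁ t := by
      intro t
      simp [caputo, J0]
    have hrl : ∀ t, rlBackDeriv 1 T h₂ t = deriv h₂ t := by
      intro t
      rw [rlBackDeriv, hJT]
    have hIBP := intervalIntegral.integral_mul_deriv_eq_deriv_mul (a := (0:ℝ)) (b := T)
      (u := h₁) (v := h₂) (u' := deriv h₁) (v' := deriv h₂)
      (fun x _ => (hd₁ x).hasDerivAt) (fun x _ => (hd₂ x).hasDerivAt)
      (hd₁'.intervalIntegrable 0 T) (hd₂'.intervalIntegrable 0 T)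
    have e1 : (∫ t in (0:ℝ)..T, caputo 1 h₁ t * h₂ t) = ∫ t in (0:ℝ)..T, deriv h₁ t * h₂ t := by
      apply intervalIntegral.integral_congr
      intro x _
      show caputo 1 h₁ x * h₂ x = deriv h₁ x * h₂ x
      rw [hcap]
    have e2 : (∫ t in (0:ℝ)..T, h₁ t * rlBackDeriv 1 T h₂ t)
        = ∫ t in (0:ℝ)..T, h₁ t * deriv h₂ t := by
      apply intervalIntegral.integral_congr
      intro x _
      show h₁ x * rlBackDeriv 1 T h₂ x = h₁ x * deriv h₂ x
      rw [hrl]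
    rw [e1, e2]
    linarith [hIBP]
  · -- case α < 1
    set β := 1 - α with hβdef
    have hβ0 : 0 < β := by simp [hβdef]; linarith
    have hβ1 : β < 1 := by simp [hβdef]; linarith
    set c := 1 / Real.Gamma β with hcdef
    have hJT : ∀ t, JT β T h₂ t = c * ∫ τ in t..T, (τ - t) ^ (β - 1) * h₂ τ := by
      intro t
      rw [JT, if_neg hβ0.ne']
    set K : ℝ → ℝ := fun u => ∫ τ in u..T, (τ - u) ^ (β - 1) * deriv h₂ τ with hKdef
    -- derivative of JT on (0,T)
    have hRd : ∀ t ∈ Ioo 0 T, HasDerivAt (JT β T h₂)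
        (c * (K t - (T - t) ^ (β - 1) * h₂ T)) t := by
      intro t ht
      have hR := (JTderiv hβ0 hβ1 hT hc₂ ht).const_mul c
      apply hR.congr_of_eventuallyEq
      filter_upwards [Iio_mem_nhds ht.2] with u hu
      rw [hJT u, JTrep hβ0 hβ1 hc₂ (le_of_lt hu)]
    have hderiv_eq : ∀ t ∈ Ioo 0 T, deriv (JT β T h₂) t
        = c * (K t - (T - t) ^ (β - 1) * h₂ T) := fun t ht => (hRd t ht).deriv
    -- interval integrability of the derivative
    have hII_derivJT : IntervalIntegrable (deriv (JT β T h₂)) volume 0 T := by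
      rw [intervalIntegrable_iff_integrableOn_Ioc_of_le hT.le]
      have hKint : IntegrableOn K (Ioo 0 T) volume := by
        have := K_II hβ0 hβ1 hT hd₂' le_rfl hT.le
        rw [intervalIntegrable_iff_integrableOn_Ioc_of_le hT.le] at this
        exact this.mono_set Ioo_subset_Ioc_self
      have hkerint : IntegrableOn (fun t => (T - t) ^ (β - 1) * h₂ T) (Ioo 0 T) volume := by
        have := (kerII hβ0 T 0).mul_const (h₂ T)
        rw [intervalIntegrable_iff_integrableOn_Ioc_of_le hT.le] at this
        exact this.mono_set Ioo_subset_Ioc_self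
      have hr_int : IntegrableOn (fun t => c * (K t - (T - t) ^ (β - 1) * h₂ T))
          (Ioo 0 T) volume := (hKint.sub hkerint).const_mul c
      have hIoo : IntegrableOn (deriv (JT β T h₂)) (Ioo 0 T) volume :=
        hr_int.congr_fun (fun t ht => (hderiv_eq t ht).symm) measurableSet_Ioo
      exact hIoo.congr_set_ae MeasureTheory.Ioo_ae_eq_Ioc.symm
    -- step 1 : Fubini
    have hcap : ∀ t, caputo α h₁ t = c * ∫ τ in (0:ℝ)..t, (t - τ) ^ (β - 1) * deriv h₁ τ := by
      intro t
      rw [caputo, J0, if_neg hβ0.ne']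
    have step1 : (∫ t in (0:ℝ)..T, caputo α h₁ t * h₂ t)
        = ∫ t in (0:ℝ)..T, deriv h₁ t * JT β T h₂ t := by
      have e1 : (∫ t in (0:ℝ)..T, caputo α h₁ t * h₂ t)
          = c * ∫ t in (0:ℝ)..T, (∫ τ in (0:ℝ)..t, (t - τ) ^ (β - 1) * deriv h₁ τ) * h₂ t := by
        rw [← intervalIntegral.integral_const_mul]
        apply intervalIntegral.integral_congr
        intro x _
        show caputo α h₁ x * h₂ x = c * ((∫ τ in (0:ℝ)..x, (x - τ) ^ (β - 1) * deriv h₁ τ) * h₂ x)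
        rw [hcap x]
        ring
      have e2 : (∫ t in (0:ℝ)..T, deriv h₁ t * JT β T h₂ t)
          = c * ∫ t in (0:ℝ)..T, deriv h₁ t * ∫ x in t..T, (x - t) ^ (β - 1) * h₂ x := by
        rw [← intervalIntegral.integral_const_mul]
        apply intervalIntegral.integral_congr
        intro x _
        show deriv h₁ x * JT β T h₂ x
          = c * (deriv h₁ x * ∫ y in x..T, (y - x) ^ (β - 1) * h₂ y)
        rw [hJT x]
        ring
      rw [e1, e2, fubini_kernel hβ0 hβ1 hT.le hd₁' hc₂.continuous]
    -- step 2 : integration by parts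
    have hIBP := intervalIntegral.integral_mul_deriv_eq_deriv_mul (a := (0:ℝ)) (b := T)
      (u := h₁) (v := JT β T h₂) (u' := deriv h₁) (v' := deriv (JT β T h₂))
      (fun x _ => (hd₁ x).hasDerivAt) (fun x _ => (hdiff x).hasDerivAt)
      (hd₁'.intervalIntegrable 0 T) hII_derivJT
    have hrl : (∫ t in (0:ℝ)..T, h₁ t * rlBackDeriv α T h₂ t)
        = ∫ t in (0:ℝ)..T, h₁ t * deriv (JT β T h₂) t := rfl
    rw [step1, hrl]
    linarith [hIBP]
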